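/- arXiv:2511.21223 — 6 statements merged into one kernel-verified Lean document; each statement's English description precedes it below -/
import Mathlib

section
/- Maxitive Donsker–Varadhan formula (sup–inf form): log Z_max = sup_{g ∈ F(Θ)} inf_{θ ∈ Θ} { −ℓ(θ) − log(g(θ)/π(θ)) }; that is, log Z_max = sup_{g ∈ F(Θ)} CBO_low(g). -/
open scoped ENNReal

/-- A possibility function on `Θ`: valued in `[0,1]` with supremum `1`. -/
def IsPossibility {Θ : Type*} (f : Θ → ℝ) : Prop :=
  (∀ θ, 0 ≤ f θ) ∧ (∀ θ, f θ ≤ 1) ∧ (⨆ θ, f θ) = 1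

/-- Extended logarithm of the quotient `g θ / π θ`, computed in `[0,∞]` with the
conventions `0/0 = 0` and `a/0 = ∞` for `a > 0`, and `log 0 = -∞`, `log ∞ = ∞`. -/
noncomputable def ratioLog {Θ : Type*} (g π : Θ → ℝ) (θ : Θ) : EReal :=
  ENNReal.log (ENNReal.ofReal (g θ) / ENNReal.ofReal (π θ))

/-- The lower consistency bound `CBO_low(g) = inf_θ { -ℓ(θ) - log(g(θ)/π(θ)) }`. -/
noncomputable def CBOlow {Θ : Type*} (ℓ π g : Θ → ℝ) : EReal :=
  ⨅ θ, ((-ℓ θ : ℝ) : EReal) - ratioLog g π θ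

/-- The maxitive marginal likelihood `Z_max = sup_θ exp(-ℓ(θ)) π(θ)`. -/
noncomputable def Zmax {Θ : Type*} (ℓ π : Θ → ℝ) : ℝ :=
  ⨆ θ, Real.exp (-ℓ θ) * π θ

/-- Maxitive Donsker–Varadhan formula, sup–inf form:
`log Z_max = sup_{g ∈ F(Θ)} CBO_low(g)`. -/
theorem maxitive_DV_supinf {Θ : Type*} [Nonempty Θ] (π ℓ : Θ → ℝ)
    (hπ : IsPossibility π) (hℓ : ∀ θ, 0 ≤ ℓ θ) :
    ((Real.log (Zmax ℓ π) : ℝ) : EReal)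
      = ⨆ g : {g : Θ → ℝ // IsPossibility g}, CBOlow ℓ π g.1 := by
  obtain ⟨hπ0, hπ1, hπsup⟩ := hπ
  set f : Θ → ℝ := fun θ => Real.exp (-ℓ θ) * π θ with hf
  have hf0 : ∀ θ, 0 ≤ f θ := fun θ => mul_nonneg (Real.exp_pos _).le (hπ0 θ)
  have hf1 : ∀ θ, f θ ≤ 1 := fun θ => by
    have h1 : Real.exp (-ℓ θ) ≤ 1 := Real.exp_le_one_iff.2 (by simpa using hℓ θ)
    calc f θ ≤ 1 * 1 := mul_le_mul h1 (hπ1 θ) (hπ0 θ) zero_le_one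
    _ = 1 := one_mul 1
  have hbdd : BddAbove (Set.range f) := ⟨1, by rintro x ⟨θ, rfl⟩; exact hf1 θ⟩
  have hbddπ : BddAbove (Set.range π) := ⟨1, by rintro x ⟨θ, rfl⟩; exact hπ1 θ⟩
  set Z := Zmax ℓ π with hZ
  have hZf : Z = ⨆ θ, f θ := rfl
  have hZle : ∀ θ, f θ ≤ Z := fun θ => le_ciSup hbdd θ
  obtain ⟨θ0, hθ0⟩ : ∃ θ0, (1:ℝ)/2 < π θ0 := by
    have h : (1:ℝ)/2 < ⨆ θ, π θ := by rw [hπsup]; norm_num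
    exact exists_lt_of_lt_ciSup h
  have hπθ0 : 0 < π θ0 := lt_trans (by norm_num) hθ0
  have hZpos : 0 < Z := lt_of_lt_of_le (mul_pos (Real.exp_pos _) hπθ0) (hZle θ0)
  -- upper bound: every CBOlow is at most log Z
  have key : ∀ g : Θ → ℝ, IsPossibility g → CBOlow ℓ π g ≤ ((Real.log Z : ℝ) : EReal) := by
    rintro g ⟨hg0, hg1, hgsup⟩
    by_contra hlt
    push_neg at hlt
    obtain ⟨c, hc1, hc2⟩ := EReal.exists_between_coe_real hlt
    set ε : ℝ := c - Real.log Z with hε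
    have hεpos : 0 < ε := by
      have := EReal.coe_lt_coe_iff.1 hc1
      linarith
    obtain ⟨θ, hθ⟩ : ∃ θ, Real.exp (-ε) < g θ := by
      have h : Real.exp (-ε) < ⨆ θ, g θ := by
        rw [hgsup]
        exact Real.exp_lt_one_iff.2 (by linarith)
      exact exists_lt_of_lt_ciSup h
    have hgθ : 0 < g θ := lt_trans (Real.exp_pos _) hθ
    have hterm : (c : EReal) < ((-ℓ θ : ℝ) : EReal) - ratioLog g π θ :=
      lt_of_lt_of_le hc2 (iInf_le _ θ)
    rcases eq_or_lt_of_le (hπ0 θ) with hπθ | hπθ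
    · -- π θ = 0 : the term is ⊥, contradiction
      have : ratioLog g π θ = ⊤ := by
        rw [ratioLog, ← hπθ, ENNReal.ofReal_zero, ENNReal.div_zero (by
          simp [ENNReal.ofReal_eq_zero, hgθ, not_le.2 hgθ]), ENNReal.log_top]
      rw [this, EReal.sub_top] at hterm
      exact absurd hterm (not_lt_bot)
    · -- π θ > 0
      have hrl : ratioLog g π θ = ((Real.log (g θ / π θ) : ℝ) : EReal) := by
        rw [ratioLog, ← ENNReal.ofReal_div_of_pos hπθ,
          ENNReal.log_ofReal_of_pos (div_pos hgθ hπθ)]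
      rw [hrl, ← EReal.coe_sub, EReal.coe_lt_coe_iff] at hterm
      have hlog1 : -ε < Real.log (g θ) := by
        have := Real.log_lt_log (Real.exp_pos _) hθ
        rwa [Real.log_exp] at this
      have hlog2 : -ℓ θ + Real.log (π θ) ≤ Real.log Z := by
        have hfθ : 0 < f θ := mul_pos (Real.exp_pos _) hπθ
        have := Real.log_le_log hfθ (hZle θ)
        rwa [hf, Real.log_mul (Real.exp_ne_zero _) hπθ.ne', Real.log_exp] at this
      rw [Real.log_div hgθ.ne' hπθ.ne'] at hterm
      have : c < Real.log Z + ε := by linarith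
      simp [hε] at this
  refine le_antisymm ?_ (iSup_le fun g => key g.1 g.2)
  -- lower bound: the optimal possibility function
  set gs : Θ → ℝ := fun θ => f θ / Z with hgs
  have hgsposs : IsPossibility gs := by
    refine ⟨fun θ => div_nonneg (hf0 θ) hZpos.le, fun θ => (div_le_one hZpos).2 (hZle θ), ?_⟩
    have h : (⨆ θ, gs θ) = (⨆ θ, f θ) * Z⁻¹ := by
      rw [Real.iSup_mul_of_nonneg (inv_nonneg.2 hZpos.le)]
      simp [hgs, div_eq_mul_inv]
    rw [h, ← hZf, mul_inv_cancel₀ hZpos.ne']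
  refine le_iSup_of_le ⟨gs, hgsposs⟩ ?_
  refine le_iInf fun θ => ?_
  rcases eq_or_lt_of_le (hπ0 θ) with hπθ | hπθ
  · -- π θ = 0 : the term is ⊤
    have hgsθ : gs θ = 0 := by simp [hgs, hf, ← hπθ]
    have : ratioLog gs π θ = ⊥ := by
      simp [ratioLog, hgsθ, ENNReal.ofReal_zero, ENNReal.zero_div]
    rw [this, EReal.coe_sub_bot]
    exact le_top
  · have hfθ : 0 < f θ := mul_pos (Real.exp_pos _) hπθ
    have hgsθ : 0 < gs θ := div_pos hfθ hZpos
    have hrl : ratioLog gs π θ = ((Real.log (gs θ / π θ) : ℝ) : EReal) := by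
      rw [ratioLog, ← ENNReal.ofReal_div_of_pos hπθ,
        ENNReal.log_ofReal_of_pos (div_pos hgsθ hπθ)]
    rw [hrl, ← EReal.coe_sub, EReal.coe_le_coe_iff]
    have h1 : gs θ / π θ = Real.exp (-ℓ θ) / Z := by
      field_simp [hgs, hf]
      show f θ / Z * Z = _
      rw [div_mul_cancel₀ _ hZpos.ne']
      show Real.exp (-ℓ θ) * π θ = _
      ring
    rw [h1, Real.log_div (Real.exp_ne_zero _) hZpos.ne', Real.log_exp]
    linarith
end

section
/- Maxitive Donsker–Varadhan formula (inf–sup form): log Z_max = inf_{g ∈ F(Θ)} sup_{θ ∈ Θ} { −ℓ(θ) − log(g(θ)/π(θ)) }; that is, log Z_max = inf_{g ∈ F(Θ)} CBO_up(g). -/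
open scoped ENNReal

/-- The upper consistency bound `CBO_up(g) = sup_θ { -ℓ(θ) - log(g(θ)/π(θ)) }`. -/
noncomputable def CBOup {Θ : Type*} (ℓ π g : Θ → ℝ) : EReal :=
  ⨆ θ, ((-ℓ θ : ℝ) : EReal) - ratioLog g π θ

/-- The maxitive posterior `g*_max(θ) = exp(-ℓ(θ)) π(θ) / Z_max`. -/
noncomputable def gstar {Θ : Type*} (ℓ π : Θ → ℝ) (θ : Θ) : ℝ :=
  Real.exp (-ℓ θ) * π θ / Zmax ℓ π

/-- The max-relative entropy `D_max(g ‖ f) = sup_θ log(g(θ)/f(θ))`. -/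
noncomputable def Dmax {Θ : Type*} (g f : Θ → ℝ) : EReal :=
  ⨆ θ, ratioLog g f θ

set_option maxHeartbeats 1000000 in
/-- Maxitive Donsker–Varadhan formula, inf–sup form:
`log Z_max = inf_{g ∈ F(Θ)} CBO_up(g)`. -/
theorem maxitive_DV_infsup {Θ : Type*} [Nonempty Θ] (π ℓ : Θ → ℝ)
    (hπ : IsPossibility π) (hℓ : ∀ θ, 0 ≤ ℓ θ) :
    ((Real.log (Zmax ℓ π) : ℝ) : EReal)
      = ⨅ g : {g : Θ → ℝ // IsPossibility g}, CBOup ℓ π g.1 := by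
  obtain ⟨hπ0, hπ1, hπs⟩ := hπ
  set f : Θ → ℝ := fun θ => Real.exp (-ℓ θ) * π θ with hf
  have hf0 : ∀ θ, 0 ≤ f θ := fun θ => mul_nonneg (Real.exp_pos _).le (hπ0 θ)
  have hf1 : ∀ θ, f θ ≤ 1 := fun θ =>
    mul_le_one₀ (Real.exp_le_one_iff.2 (neg_nonpos.2 (hℓ θ))) (hπ0 θ) (hπ1 θ)
  have hbdd : BddAbove (Set.range f) := ⟨1, by rintro x ⟨θ, rfl⟩; exact hf1 θ⟩
  have hZ : Zmax ℓ π = ⨆ θ, f θ := rfl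
  have hZle : ∀ θ, f θ ≤ Zmax ℓ π := fun θ => le_ciSup hbdd θ
  -- some θ0 with π θ0 > 0
  obtain ⟨θ0, hθ0⟩ : ∃ θ, 0 < π θ := by
    by_contra h
    push_neg at h
    have : ∀ θ, π θ = 0 := fun θ => le_antisymm (h θ) (hπ0 θ)
    have : (⨆ θ, π θ) = 0 := by simp [this]
    rw [hπs] at this; norm_num at this
  have hZpos : 0 < Zmax ℓ π :=
    lt_of_lt_of_le (mul_pos (Real.exp_pos _) hθ0) (hZle θ0)
  have hZ1 : Zmax ℓ π ≤ 1 := ciSup_le hf1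
  -- ofReal commutes with the sup here
  have hofsup : ENNReal.ofReal (Zmax ℓ π) = ⨆ θ, ENNReal.ofReal (f θ) := by
    apply le_antisymm
    · have hT : (⨆ θ, ENNReal.ofReal (f θ)) ≤ 1 :=
        iSup_le fun θ => ENNReal.ofReal_le_one.2 (hf1 θ)
      have hTne : (⨆ θ, ENNReal.ofReal (f θ)) ≠ ⊤ := (lt_of_le_of_lt hT (by norm_num)).ne
      rw [ENNReal.ofReal_le_iff_le_toReal hTne]
      refine ciSup_le fun θ => ?_
      calc f θ = (ENNReal.ofReal (f θ)).toReal := by rw [ENNReal.toReal_ofReal (hf0 θ)]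
        _ ≤ _ := ENNReal.toReal_mono hTne (le_iSup (fun θ => ENNReal.ofReal (f θ)) θ)
    · exact iSup_le fun θ => ENNReal.ofReal_le_ofReal (hZle θ)
  -- log Zmax as a sup in EReal
  have hlogZ : ((Real.log (Zmax ℓ π) : ℝ) : EReal)
      = ⨆ θ, ENNReal.log (ENNReal.ofReal (f θ)) := by
    rw [← ENNReal.log_ofReal_of_pos hZpos, hofsup]
    exact ENNReal.logOrderIso.map_iSup _
  -- pointwise log decomposition
  have hlogf : ∀ θ, ENNReal.log (ENNReal.ofReal (f θ))
      = ((-ℓ θ : ℝ) : EReal) + ENNReal.log (ENNReal.ofReal (π θ)) := by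
    intro θ
    rw [hf, ENNReal.ofReal_mul (Real.exp_pos _).le, ENNReal.log_mul_add,
      ENNReal.log_ofReal_of_pos (Real.exp_pos _), Real.log_exp]
  -- Lower bound: log Zmax ≤ CBOup g for any possibility g
  have lower : ∀ g : Θ → ℝ, IsPossibility g →
      ((Real.log (Zmax ℓ π) : ℝ) : EReal) ≤ CBOup ℓ π g := by
    intro g ⟨hg0, hg1, hgs⟩
    rw [hlogZ]
    refine iSup_le fun θ => le_iSup_of_le θ ?_
    rw [hlogf θ]
    have h1 : ratioLog g π θ ≤ - ENNReal.log (ENNReal.ofReal (π θ)) := by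
      unfold ratioLog
      rw [← ENNReal.log_inv, ENNReal.log_le_log_iff]
      calc ENNReal.ofReal (g θ) / ENNReal.ofReal (π θ)
          ≤ 1 / ENNReal.ofReal (π θ) :=
            ENNReal.div_le_div_right (ENNReal.ofReal_le_one.2 (hg1 θ)) _
        _ = (ENNReal.ofReal (π θ))⁻¹ := one_div _
    calc ((-ℓ θ : ℝ) : EReal) + ENNReal.log (ENNReal.ofReal (π θ))
        = ((-ℓ θ : ℝ) : EReal) - (- ENNReal.log (ENNReal.ofReal (π θ))) := by
          rw [sub_eq_add_neg, neg_neg]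
      _ ≤ ((-ℓ θ : ℝ) : EReal) - ratioLog g π θ := EReal.sub_le_sub le_rfl h1
  -- the near-optimal g
  set g0 : Θ → ℝ := fun θ => if π θ = 0 then 1 else f θ / Zmax ℓ π with hg0def
  have hg0le : ∀ θ, f θ / Zmax ℓ π ≤ g0 θ := by
    intro θ
    by_cases h : π θ = 0
    · simp only [hg0def, if_pos h]
      rw [hf]; simp [h]
    · simp [hg0def, if_neg h]
  have hg01 : ∀ θ, g0 θ ≤ 1 := by
    intro θ
    by_cases h : π θ = 0
    · simp [hg0def, h]
    · simp only [hg0def, if_neg h]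
      exact div_le_one_of_le₀ (hZle θ) hZpos.le
  have hg0poss : IsPossibility g0 := by
    refine ⟨fun θ => ?_, hg01, le_antisymm (ciSup_le hg01) ?_⟩
    · by_cases h : π θ = 0
      · simp [hg0def, h]
      · simp only [hg0def, if_neg h]
        exact div_nonneg (hf0 θ) hZpos.le
    · have hbg : BddAbove (Set.range g0) := ⟨1, by rintro x ⟨θ, rfl⟩; exact hg01 θ⟩
      have h1 : Zmax ℓ π / Zmax ℓ π ≤ ⨆ θ, g0 θ := by
        rw [div_le_iff₀ hZpos, hZ]
        refine ciSup_le fun θ => ?_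
        have : f θ / Zmax ℓ π ≤ ⨆ θ, g0 θ :=
          le_trans (hg0le θ) (le_ciSup hbg θ)
        calc f θ = f θ / Zmax ℓ π * Zmax ℓ π := by field_simp
          _ ≤ _ := mul_le_mul_of_nonneg_right this hZpos.le
      rwa [div_self hZpos.ne'] at h1
  -- Upper bound: CBOup g0 ≤ log Zmax
  have upper : CBOup ℓ π g0 ≤ ((Real.log (Zmax ℓ π) : ℝ) : EReal) := by
    refine iSup_le fun θ => ?_
    by_cases h : π θ = 0
    · have hgθ : g0 θ = 1 := by simp [hg0def, h]
      have : ratioLog g0 π θ = ⊤ := by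
        unfold ratioLog
        rw [hgθ, h, ENNReal.ofReal_one, ENNReal.ofReal_zero,
          ENNReal.div_zero one_ne_zero, ENNReal.log_top]
      rw [this, EReal.sub_top]
      exact bot_le
    · have hπpos : 0 < π θ := lt_of_le_of_ne (hπ0 θ) (Ne.symm h)
      have hfpos : 0 < f θ := mul_pos (Real.exp_pos _) hπpos
      have hgval : g0 θ = f θ / Zmax ℓ π := by simp [hg0def, h]
      have hratio : g0 θ / π θ = Real.exp (-ℓ θ) / Zmax ℓ π := by
        rw [hgval, hf]; field_simp
      have hrpos : 0 < g0 θ / π θ := by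
        rw [hratio]; exact div_pos (Real.exp_pos _) hZpos
      have : ratioLog g0 π θ = ((Real.log (g0 θ / π θ) : ℝ) : EReal) := by
        unfold ratioLog
        rw [← ENNReal.ofReal_div_of_pos hπpos, ENNReal.log_ofReal_of_pos hrpos]
      rw [this, hratio, Real.log_div (Real.exp_ne_zero _) hZpos.ne', Real.log_exp]
      rw [← EReal.coe_sub]
      norm_num
  -- conclude
  refine le_antisymm (le_iInf fun g => lower g.1 g.2) ?_
  have h2 : (⨅ g : {g : Θ → ℝ // IsPossibility g}, CBOup ℓ π g.1) ≤ CBOup ℓ π g0 :=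
    iInf_le (fun g : {g : Θ → ℝ // IsPossibility g} => CBOup ℓ π g.1) ⟨g0, hg0poss⟩
  exact le_trans h2 upper
end

section
/- Characterization of the maximizers of the lower consistency bound: a possibility function g ∈ F(Θ) satisfies CBO_low(g) = sup_{g' ∈ F(Θ)} CBO_low(g') if and only if g ⪯ g*_max; that is, argmax_{g ∈ F(Θ)} CBO_low(g) = { g ∈ F(Θ) : g ⪯ g*_max }. -/
open scoped ENNReal

lemma ratioLog_of_pos' {Θ : Type*} {g π : Θ → ℝ} {θ : Θ} (hg : 0 < g θ) (hπ : 0 < π θ) :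
    ratioLog g π θ = ((Real.log (g θ / π θ) : ℝ) : EReal) := by
  rw [ratioLog, ← ENNReal.ofReal_div_of_pos hπ, ENNReal.log_ofReal_of_pos (div_pos hg hπ)]

lemma ratioLog_of_zero' {Θ : Type*} {g π : Θ → ℝ} {θ : Θ} (hg : g θ = 0) :
    ratioLog g π θ = ⊥ := by
  rw [ratioLog, hg, ENNReal.ofReal_zero, ENNReal.zero_div, ENNReal.log_zero]

lemma ratioLog_of_pi_zero' {Θ : Type*} {g π : Θ → ℝ} {θ : Θ} (hg : 0 < g θ) (hπ : π θ = 0) :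
    ratioLog g π θ = ⊤ := by
  rw [ratioLog, hπ, ENNReal.ofReal_zero, ENNReal.div_zero (by simpa [ENNReal.ofReal_eq_zero] using hg.not_ge), ENNReal.log_top]

/-- The maximizers of the lower consistency bound over the set of possibility
functions are exactly the possibility functions dominated by the maxitive
posterior `g*_max`. -/
theorem argmax_CBOlow {Θ : Type*} [Nonempty Θ] (π ℓ : Θ → ℝ)
    (hπ : IsPossibility π) (hℓ : ∀ θ, 0 ≤ ℓ θ) :
    {g : Θ → ℝ | IsPossibility g ∧
        CBOlow ℓ π g = ⨆ g' : {g' : Θ → ℝ // IsPossibility g'}, CBOlow ℓ π g'.1}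
      = {g : Θ → ℝ | IsPossibility g ∧ ∀ θ, g θ ≤ gstar ℓ π θ} := by
  obtain ⟨hπ0, hπ1, hπs⟩ := hπ
  set Z := Zmax ℓ π with hZ
  have bdd : BddAbove (Set.range fun θ => Real.exp (-ℓ θ) * π θ) := by
    refine ⟨1, ?_⟩
    rintro _ ⟨θ, rfl⟩
    exact mul_le_one₀ (Real.exp_le_one_iff.2 (neg_nonpos.2 (hℓ θ))) (hπ0 θ) (hπ1 θ)
  have hZub : ∀ θ, Real.exp (-ℓ θ) * π θ ≤ Z := fun θ => le_ciSup bdd θ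
  have hZpos : 0 < Z := by
    have hπbdd : BddAbove (Set.range π) := ⟨1, by rintro _ ⟨θ, rfl⟩; exact hπ1 θ⟩
    have : (1 / 2 : ℝ) < ⨆ θ, π θ := by rw [hπs]; norm_num
    obtain ⟨θ0, hθ0⟩ := (lt_ciSup_iff hπbdd).1 this
    have : 0 < Real.exp (-ℓ θ0) * π θ0 :=
      mul_pos (Real.exp_pos _) (lt_trans (by norm_num) hθ0)
    exact lt_of_lt_of_le this (hZub θ0)
  have hgstar : IsPossibility (gstar ℓ π) := by
    refine ⟨fun θ => div_nonneg (mul_nonneg (Real.exp_pos _).le (hπ0 θ)) hZpos.le,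
      fun θ => (div_le_one hZpos).2 (hZub θ), ?_⟩
    have : (⨆ θ, gstar ℓ π θ) = (⨆ θ, Real.exp (-ℓ θ) * π θ) * Z⁻¹ := by
      rw [Real.iSup_mul_of_nonneg (inv_nonneg.2 hZpos.le)]
      simp only [gstar, div_eq_mul_inv]
      rfl
    rw [this]
    exact mul_inv_cancel₀ hZpos.ne'
  -- termwise lower bound for dominated g
  have key_ge : ∀ g : Θ → ℝ, (∀ θ, 0 ≤ g θ) → (∀ θ, g θ ≤ gstar ℓ π θ) →
      (Real.log Z : EReal) ≤ CBOlow ℓ π g := by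
    intro g hg0 hle
    refine le_iInf fun θ => ?_
    rcases eq_or_lt_of_le (hg0 θ) with h0 | hpos
    · rw [ratioLog_of_zero' h0.symm, EReal.coe_sub_bot]
      exact le_top
    · have hπθ : 0 < π θ := by
        rcases eq_or_lt_of_le (hπ0 θ) with h | h
        · exfalso
          have hgs0 : gstar ℓ π θ = 0 := by simp [gstar, ← h]
          have hh := hle θ
          rw [hgs0] at hh
          linarith
        · exact h
      rw [ratioLog_of_pos' hpos hπθ, ← EReal.coe_sub, EReal.coe_le_coe_iff]
      have h1 : g θ * Z ≤ Real.exp (-ℓ θ) * π θ := by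
        have := hle θ
        rw [gstar, le_div_iff₀ hZpos] at this
        exact this
      have h2 : Real.log (g θ * Z) ≤ Real.log (Real.exp (-ℓ θ) * π θ) :=
        (Real.log_le_log_iff (mul_pos hpos hZpos) (mul_pos (Real.exp_pos _) hπθ)).2 h1
      rw [Real.log_mul hpos.ne' hZpos.ne', Real.log_mul (Real.exp_pos _).ne' hπθ.ne',
        Real.log_exp] at h2
      rw [Real.log_div hpos.ne' hπθ.ne']
      linarith
  -- upper bound for any possibility g
  have key_le : ∀ g : Θ → ℝ, IsPossibility g → CBOlow ℓ π g ≤ (Real.log Z : EReal) := by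
    rintro g ⟨hg0, hg1, hgs⟩
    by_contra hcon
    push_neg at hcon
    obtain ⟨b, hb1, hb2⟩ := EReal.exists_between_coe_real hcon
    have hb1' : Real.log Z < b := by exact_mod_cast hb1
    have hgbdd : BddAbove (Set.range g) := ⟨1, by rintro _ ⟨θ, rfl⟩; exact hg1 θ⟩
    have hlt1 : Real.exp (Real.log Z - b) < ⨆ θ, g θ := by
      rw [hgs]
      exact Real.exp_lt_one_iff.2 (by linarith)
    obtain ⟨θ, hθ⟩ := (lt_ciSup_iff hgbdd).1 hlt1
    have hgθ : 0 < g θ := lt_trans (Real.exp_pos _) hθ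
    rcases eq_or_lt_of_le (hπ0 θ) with hπz | hπθ
    · have hterm : ((-ℓ θ : ℝ) : EReal) - ratioLog g π θ = ⊥ := by
        rw [ratioLog_of_pi_zero' hgθ hπz.symm, EReal.sub_top]
      have : CBOlow ℓ π g ≤ ⊥ := le_of_le_of_eq (iInf_le _ θ) hterm
      exact absurd (lt_of_le_of_lt this (bot_lt_iff_ne_bot.2 (by simp))) (not_lt.2 hb2.le)
    · have hterm : ((-ℓ θ : ℝ) : EReal) - ratioLog g π θ
          = ((-ℓ θ - Real.log (g θ / π θ) : ℝ) : EReal) := by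
        rw [ratioLog_of_pos' hgθ hπθ, ← EReal.coe_sub]
      have hreal : -ℓ θ - Real.log (g θ / π θ) < b := by
        have h2 : Real.log Z - b < Real.log (g θ) := by
          have := Real.log_lt_log (Real.exp_pos _) hθ
          rwa [Real.log_exp] at this
        have h3 : Real.log (Real.exp (-ℓ θ) * π θ) ≤ Real.log Z :=
          (Real.log_le_log_iff (mul_pos (Real.exp_pos _) hπθ) hZpos).2 (hZub θ)
        rw [Real.log_mul (Real.exp_pos _).ne' hπθ.ne', Real.log_exp] at h3
        rw [Real.log_div hgθ.ne' hπθ.ne']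
        linarith
      have h4 : CBOlow ℓ π g ≤ ((-ℓ θ - Real.log (g θ / π θ) : ℝ) : EReal) :=
        le_of_le_of_eq (iInf_le _ θ) hterm
      have h5 : CBOlow ℓ π g < (b : EReal) :=
        lt_of_le_of_lt h4 (EReal.coe_lt_coe_iff.2 hreal)
      exact absurd (lt_trans hb2 h5) (lt_irrefl _)
  -- strict bound when domination fails
  have key_lt : ∀ g : Θ → ℝ, ∀ θ0, gstar ℓ π θ0 < g θ0 →
      CBOlow ℓ π g < (Real.log Z : EReal) := by
    intro g θ0 hgt
    have hgθ : 0 < g θ0 := lt_of_le_of_lt (hgstar.1 θ0) hgt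
    rcases eq_or_lt_of_le (hπ0 θ0) with hπz | hπθ
    · have hterm : ((-ℓ θ0 : ℝ) : EReal) - ratioLog g π θ0 = ⊥ := by
        rw [ratioLog_of_pi_zero' hgθ hπz.symm, EReal.sub_top]
      exact lt_of_le_of_lt (le_of_le_of_eq (iInf_le _ θ0) hterm) (EReal.bot_lt_coe _)
    · have hterm : ((-ℓ θ0 : ℝ) : EReal) - ratioLog g π θ0
          = ((-ℓ θ0 - Real.log (g θ0 / π θ0) : ℝ) : EReal) := by
        rw [ratioLog_of_pos' hgθ hπθ, ← EReal.coe_sub]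
      have hreal : -ℓ θ0 - Real.log (g θ0 / π θ0) < Real.log Z := by
        have h1 : Real.exp (-ℓ θ0) * π θ0 / Z < g θ0 := by rwa [gstar, ← hZ] at hgt
        have h2 : Real.log (Real.exp (-ℓ θ0) * π θ0 / Z) < Real.log (g θ0) :=
          Real.log_lt_log (div_pos (mul_pos (Real.exp_pos _) hπθ) hZpos) h1
        rw [Real.log_div (mul_pos (Real.exp_pos _) hπθ).ne' hZpos.ne',
          Real.log_mul (Real.exp_pos _).ne' hπθ.ne', Real.log_exp] at h2
        rw [Real.log_div hgθ.ne' hπθ.ne']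
        linarith
      exact lt_of_le_of_lt (le_of_le_of_eq (iInf_le _ θ0) hterm)
        (EReal.coe_lt_coe_iff.2 hreal)
  -- the supremum equals log Z
  have hS : (⨆ g' : {g' : Θ → ℝ // IsPossibility g'}, CBOlow ℓ π g'.1)
      = (Real.log Z : EReal) := by
    refine le_antisymm (iSup_le fun g' => key_le g'.1 g'.2) ?_
    exact le_trans (key_ge (gstar ℓ π) hgstar.1 (fun θ => le_refl _))
      (le_iSup (fun g' : {g' : Θ → ℝ // IsPossibility g'} => CBOlow ℓ π g'.1)
        ⟨gstar ℓ π, hgstar⟩)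
  ext g
  simp only [Set.mem_setOf_eq]
  constructor
  · rintro ⟨hg, heq⟩
    refine ⟨hg, fun θ => ?_⟩
    by_contra hlt
    push_neg at hlt
    have := key_lt g θ hlt
    rw [heq, hS] at this
    exact lt_irrefl _ this
  · rintro ⟨hg, hle⟩
    refine ⟨hg, ?_⟩
    rw [hS]
    exact le_antisymm (key_le g hg) (key_ge g hg.1 hle)
end

section
/- Consistency-bound sandwich: for every possibility function g ∈ F(Θ), CBO_low(g) ≤ log Z_max ≤ CBO_up(g). -/
open scoped ENNReal

/-!
Each term `-ℓ θ - log (g θ / π θ)` is the logarithm of `e^{-ℓ θ} (g θ / π θ)⁻¹ ∈ [0,∞]`, and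
`log : [0,∞] → [-∞,∞]` is an order isomorphism, so both bounds become inequalities in `[0,∞]`
between `Z_max` and the infimum or supremum of these ratios. Since `g ≤ 1`, each ratio is at least
`e^{-ℓ θ} π θ`, whose supremum is `Z_max`; and each ratio is at most `Z_max / g θ`, whose infimum
is `Z_max / sup g = Z_max`.
-/

open ENNReal Set

theorem ENNReal.ofReal_ciSup {ι : Sort*} [Nonempty ι] {f : ι → ℝ} (hf : BddAbove (range f)) :
    ENNReal.ofReal (⨆ i, f i) = ⨆ i, ENNReal.ofReal (f i) :=
  ENNReal.ofReal_mono.map_ciSup_of_continuousAt ENNReal.continuous_ofReal.continuousAt hf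

theorem ENNReal.div_iSup_of_ne {ι : Sort*} (f : ι → ℝ≥0∞) {a : ℝ≥0∞} (ha₀ : a ≠ 0)
    (ha : a ≠ ∞) : a / ⨆ i, f i = ⨅ i, a / f i := by
  simp_rw [div_eq_mul_inv, inv_iSup, mul_iInf_of_ne ha₀ ha]

theorem ENNReal.log_ofReal_exp (r : ℝ) : log (ENNReal.ofReal (Real.exp r)) = r := by
  rw [log_ofReal_of_pos (Real.exp_pos r), Real.log_exp]

theorem EReal.coe_sub_log (r : ℝ) (x : ℝ≥0∞) :
    (r : EReal) - log x = log (ENNReal.ofReal (Real.exp r) * x⁻¹) := by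
  rw [log_mul_add, log_inv, log_ofReal_exp, sub_eq_add_neg]

theorem IsPossibility.iSup_ofReal {Θ : Type*} [Nonempty Θ] {g : Θ → ℝ} (hg : IsPossibility g) :
    ⨆ θ, ENNReal.ofReal (g θ) = 1 := by
  rw [← ENNReal.ofReal_ciSup ⟨1, forall_mem_range.2 hg.2.1⟩, hg.2.2, ofReal_one]

section

variable {Θ : Type*} (ℓ π g : Θ → ℝ)

/-- `e^{-ℓ θ} π θ / g θ`, written as `e^{-ℓ θ} (g θ / π θ)⁻¹` so that its logarithm is the
consistency-bound term also at `g θ = π θ = 0`, where `ratioLog` reads `0/0` as `0`. -/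
noncomputable def cboRatio (θ : Θ) : ℝ≥0∞ :=
  ENNReal.ofReal (Real.exp (-ℓ θ)) * (ENNReal.ofReal (g θ) / ENNReal.ofReal (π θ))⁻¹

theorem CBOlow_eq_log_iInf : CBOlow ℓ π g = log (⨅ θ, cboRatio ℓ π g θ) := by
  simp only [CBOlow, ratioLog, EReal.coe_sub_log, cboRatio]
  exact (logOrderIso.map_iInf _).symm

theorem CBOup_eq_log_iSup : CBOup ℓ π g = log (⨆ θ, cboRatio ℓ π g θ) := by
  simp only [CBOup, ratioLog, EReal.coe_sub_log, cboRatio]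
  exact (logOrderIso.map_iSup _).symm

variable {ℓ π g}

theorem ofReal_exp_mul_le_cboRatio {θ : Θ} (hg : g θ ≤ 1) :
    ENNReal.ofReal (Real.exp (-ℓ θ) * π θ) ≤ cboRatio ℓ π g θ := by
  rw [cboRatio, ENNReal.ofReal_mul (Real.exp_pos _).le]
  gcongr
  calc ENNReal.ofReal (π θ) = (ENNReal.ofReal (π θ))⁻¹⁻¹ := (inv_inv _).symm
    _ ≤ _ := by
      gcongr
      calc ENNReal.ofReal (g θ) / ENNReal.ofReal (π θ)
          ≤ 1 / ENNReal.ofReal (π θ) := by gcongr; exact ofReal_le_one.2 hg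
        _ = _ := one_div _

theorem cboRatio_le_div {θ : Θ} {c : ℝ≥0∞} (hc : c ≠ 0)
    (h : ENNReal.ofReal (Real.exp (-ℓ θ) * π θ) ≤ c) :
    cboRatio ℓ π g θ ≤ c / ENNReal.ofReal (g θ) := by
  rcases eq_or_ne (ENNReal.ofReal (g θ)) 0 with hg | hg
  · rw [hg, ENNReal.div_zero hc]
    exact le_top
  · rw [cboRatio, ENNReal.inv_div (Or.inr ofReal_ne_top) (Or.inr hg), ← mul_div_assoc,
      ← ENNReal.ofReal_mul (Real.exp_pos _).le]
    gcongr

theorem bddAbove_exp_neg_mul (hℓ : ∀ θ, 0 ≤ ℓ θ) (hπ : ∀ θ, π θ ≤ 1) :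
    BddAbove (range fun θ => Real.exp (-ℓ θ) * π θ) :=
  ⟨1, forall_mem_range.2 fun θ =>
    (mul_le_of_le_one_right (Real.exp_pos _).le (hπ θ)).trans
      (Real.exp_le_one_iff.2 (neg_nonpos.2 (hℓ θ)))⟩

theorem Zmax_pos [Nonempty Θ] (hπ : IsPossibility π) (hℓ : ∀ θ, 0 ≤ ℓ θ) : 0 < Zmax ℓ π := by
  obtain ⟨θ, hθ⟩ : ∃ θ, 0 < π θ := exists_lt_of_lt_ciSup (hπ.2.2 ▸ one_pos)
  exact (mul_pos (Real.exp_pos _) hθ).trans_le (le_ciSup (bddAbove_exp_neg_mul hℓ hπ.2.1) θ)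

theorem iInf_cboRatio_le_ofReal_Zmax [Nonempty Θ] (hπ : IsPossibility π) (hℓ : ∀ θ, 0 ≤ ℓ θ)
    (hg : IsPossibility g) : ⨅ θ, cboRatio ℓ π g θ ≤ ENNReal.ofReal (Zmax ℓ π) := by
  have hZ : ENNReal.ofReal (Zmax ℓ π) ≠ 0 := (ofReal_pos.2 (Zmax_pos hπ hℓ)).ne'
  calc ⨅ θ, cboRatio ℓ π g θ ≤ ⨅ θ, ENNReal.ofReal (Zmax ℓ π) / ENNReal.ofReal (g θ) :=
        iInf_mono fun θ => cboRatio_le_div hZ <|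
          ofReal_le_ofReal (le_ciSup (bddAbove_exp_neg_mul hℓ hπ.2.1) θ)
    _ = ENNReal.ofReal (Zmax ℓ π) / ⨆ θ, ENNReal.ofReal (g θ) :=
        (ENNReal.div_iSup_of_ne _ hZ ofReal_ne_top).symm
    _ = ENNReal.ofReal (Zmax ℓ π) := by rw [hg.iSup_ofReal, div_one]

theorem ofReal_Zmax_le_iSup_cboRatio [Nonempty Θ] (hπ : ∀ θ, π θ ≤ 1) (hℓ : ∀ θ, 0 ≤ ℓ θ)
    (hg : ∀ θ, g θ ≤ 1) : ENNReal.ofReal (Zmax ℓ π) ≤ ⨆ θ, cboRatio ℓ π g θ := by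
  rw [Zmax, ENNReal.ofReal_ciSup (bddAbove_exp_neg_mul hℓ hπ)]
  exact iSup_mono fun θ => ofReal_exp_mul_le_cboRatio (hg θ)

end

/-- Consistency-bound sandwich: `CBO_low(g) ≤ log Z_max ≤ CBO_up(g)` for every
possibility function `g`. -/
theorem CBO_sandwich {Θ : Type*} [Nonempty Θ] (π ℓ g : Θ → ℝ)
    (hπ : IsPossibility π) (hℓ : ∀ θ, 0 ≤ ℓ θ) (hg : IsPossibility g) :
    CBOlow ℓ π g ≤ ((Real.log (Zmax ℓ π) : ℝ) : EReal) ∧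
      ((Real.log (Zmax ℓ π) : ℝ) : EReal) ≤ CBOup ℓ π g := by
  rw [← log_ofReal_of_pos (Zmax_pos hπ hℓ), CBOlow_eq_log_iInf, CBOup_eq_log_iSup,
    log_le_log_iff, log_le_log_iff]
  exact ⟨iInf_cboRatio_le_ofReal_Zmax hπ hℓ hg,
    ofReal_Zmax_le_iSup_cboRatio hπ.2.1 hℓ hg.2.1⟩
end

section
/- Conjugacy of the possibilistic exponential family: let A : ℝ^d → ℝ, λ, t ∈ ℝ^d, ν ≥ 0, and set μ = (t + νλ)/(ν + 1). Assume A†(λ) < ∞ and A†(μ) < ∞. Then sup_{θ∈ℝ^d} exp(⟨t, θ⟩ − A(θ)) · g_λ(θ)^ν = exp((ν+1)·A†(μ) − ν·A†(λ)) ∈ (0, ∞), and for every θ ∈ ℝ^d, the normalized product exp(⟨t, θ⟩ − A(θ)) · g_λ(θ)^ν / sup_{θ'∈ℝ^d} [ exp(⟨t, θ'⟩ − A(θ')) · g_λ(θ')^ν ] equals g_μ(θ)^{ν+1}. In other words, the possibilistic posterior obtained from the prior g_λ^ν and the exponential-family likelihood with sufficient statistic t is g_{(t+νλ)/(ν+1)}^{ν+1}.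 -/
/-! Writing `μ = (t + νλ)/(ν+1)`, the likelihood times the prior `g_λ^ν` is
`exp((ν+1)(⟨μ, θ⟩ − A(θ)) − ν A†(λ))`. Since `x ↦ exp((ν+1)x − c)` is continuous and increasing,
its supremum over `θ` is obtained by substituting `sup_θ (⟨μ, θ⟩ − A(θ)) = A†(μ)`, which is a
finite real number. Dividing by it leaves exactly `g_μ(θ)^(ν+1)`. -/

open scoped RealInnerProductSpace

/-- The convex conjugate `A†(λ) = sup_θ { ⟨λ, θ⟩ − A(θ) }`, valued in `(−∞, ∞]`
(encoded in the extended reals). -/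
noncomputable def Adag {d : ℕ} (A : EuclideanSpace ℝ (Fin d) → ℝ)
    (l : EuclideanSpace ℝ (Fin d)) : EReal :=
  ⨆ θ, ((⟪l, θ⟫ - A θ : ℝ) : EReal)

/-- The exponential-family possibility function
`g_λ(θ) = exp(⟨λ, θ⟩ − A†(λ) − A(θ))` (for `λ` with `A†(λ) < ∞`). -/
noncomputable def gExp {d : ℕ} (A : EuclideanSpace ℝ (Fin d) → ℝ)
    (l θ : EuclideanSpace ℝ (Fin d)) : ℝ :=
  Real.exp (⟪l, θ⟫ - (Adag A l).toReal - A θ)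

theorem Real.ciSup_exp_mul_sub {ι : Sort*} [Nonempty ι] {f : ι → ℝ} (hf : BddAbove (Set.range f))
    {c : ℝ} (hc : 0 ≤ c) (b : ℝ) :
    ⨆ i, Real.exp (c * f i - b) = Real.exp (c * (⨆ i, f i) - b) := by
  refine (Monotone.map_ciSup_of_continuousAt (f := fun x => Real.exp (c * x - b)) (by fun_prop)
    (fun x y hxy => ?_) hf).symm
  dsimp only
  gcongr

section Conjugate

variable {d : ℕ} (A : EuclideanSpace ℝ (Fin d) → ℝ)

theorem inner_sub_le_Adag (l θ : EuclideanSpace ℝ (Fin d)) :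
    ((⟪l, θ⟫ - A θ : ℝ) : EReal) ≤ Adag A l :=
  le_iSup (fun θ => ((⟪l, θ⟫ - A θ : ℝ) : EReal)) θ

theorem Adag_ne_bot (l : EuclideanSpace ℝ (Fin d)) : Adag A l ≠ ⊥ :=
  ne_bot_of_le_ne_bot (EReal.coe_ne_bot _) (inner_sub_le_Adag A l 0)

variable {A} {l : EuclideanSpace ℝ (Fin d)}

theorem bddAbove_range_inner_sub (hl : Adag A l ≠ ⊤) :
    BddAbove (Set.range fun θ => ⟪l, θ⟫ - A θ) := by
  refine ⟨(Adag A l).toReal, ?_⟩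
  rintro _ ⟨θ, rfl⟩
  rw [← EReal.coe_le_coe_iff, EReal.coe_toReal hl (Adag_ne_bot A l)]
  exact inner_sub_le_Adag A l θ

theorem ciSup_inner_sub_eq_toReal_Adag (hl : Adag A l ≠ ⊤) :
    ⨆ θ, (⟪l, θ⟫ - A θ) = (Adag A l).toReal := by
  rw [Adag, ← Monotone.map_ciSup_of_continuousAt continuous_coe_real_ereal.continuousAt
    EReal.coe_strictMono.monotone (bddAbove_range_inner_sub hl), EReal.toReal_coe]

end Conjugate

theorem exp_inner_sub_mul_gExp_rpow {d : ℕ} (A : EuclideanSpace ℝ (Fin d) → ℝ)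
    {l t μ : EuclideanSpace ℝ (Fin d)} {ν : ℝ} (hν : ν + 1 ≠ 0)
    (hμ : μ = (ν + 1)⁻¹ • (t + ν • l)) (θ : EuclideanSpace ℝ (Fin d)) :
    Real.exp (⟪t, θ⟫ - A θ) * gExp A l θ ^ ν
      = Real.exp ((ν + 1) * (⟪μ, θ⟫ - A θ) - ν * (Adag A l).toReal) := by
  have hinner : (ν + 1) * ⟪μ, θ⟫ = ⟪t, θ⟫ + ν * ⟪l, θ⟫ := by
    rw [hμ, real_inner_smul_left, inner_add_left, real_inner_smul_left, mul_inv_cancel_left₀ hν]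
  rw [gExp, ← Real.exp_mul, ← Real.exp_add]
  congr 1
  linear_combination -hinner

theorem expFamily_conjugacy_general {d : ℕ}
    (A : EuclideanSpace ℝ (Fin d) → ℝ) (l t : EuclideanSpace ℝ (Fin d))
    (ν : ℝ) (hν : 0 ≤ ν) (μ : EuclideanSpace ℝ (Fin d))
    (hμ : μ = (ν + 1)⁻¹ • (t + ν • l))
    (hμfin : Adag A μ ≠ ⊤) :
    (⨆ θ, Real.exp (⟪t, θ⟫ - A θ) * gExp A l θ ^ ν)
        = Real.exp ((ν + 1) * (Adag A μ).toReal - ν * (Adag A l).toReal) ∧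
    ∀ θ, Real.exp (⟪t, θ⟫ - A θ) * gExp A l θ ^ ν
          / (⨆ θ', Real.exp (⟪t, θ'⟫ - A θ') * gExp A l θ' ^ ν)
        = gExp A μ θ ^ (ν + 1) := by
  have hν1 : 0 < ν + 1 := by linarith
  have hprod := exp_inner_sub_mul_gExp_rpow A hν1.ne' hμ
  have hsup : (⨆ θ, Real.exp (⟪t, θ⟫ - A θ) * gExp A l θ ^ ν)
      = Real.exp ((ν + 1) * (Adag A μ).toReal - ν * (Adag A l).toReal) := by
    simp only [hprod]
    rw [Real.ciSup_exp_mul_sub (bddAbove_range_inner_sub hμfin) hν1.le,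
      ciSup_inner_sub_eq_toReal_Adag hμfin]
  refine ⟨hsup, fun θ => ?_⟩
  rw [hprod, hsup, ← Real.exp_sub, gExp, ← Real.exp_mul]
  congr 1
  ring

/-- Conjugacy of the possibilistic exponential family: the possibilistic
posterior obtained from the prior `g_λ^ν` and the exponential-family likelihood
with sufficient statistic `t` is `g_μ^{ν+1}` with `μ = (t + νλ)/(ν+1)`, and the
normalizing supremum equals `exp((ν+1)A†(μ) − νA†(λ))`. -/
theorem expFamily_conjugacy {d : ℕ} (hd : 1 ≤ d)
    (A : EuclideanSpace ℝ (Fin d) → ℝ) (l t : EuclideanSpace ℝ (Fin d))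
    (ν : ℝ) (hν : 0 ≤ ν) (μ : EuclideanSpace ℝ (Fin d))
    (hμ : μ = (ν + 1)⁻¹ • (t + ν • l))
    (hl : Adag A l ≠ ⊤) (hμfin : Adag A μ ≠ ⊤) :
    (⨆ θ, Real.exp (⟪t, θ⟫ - A θ) * gExp A l θ ^ ν)
        = Real.exp ((ν + 1) * (Adag A μ).toReal - ν * (Adag A l).toReal) ∧
    ∀ θ, Real.exp (⟪t, θ⟫ - A θ) * gExp A l θ ^ ν
          / (⨆ θ', Real.exp (⟪t, θ'⟫ - A θ') * gExp A l θ' ^ ν)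
        = gExp A μ θ ^ (ν + 1) :=
  expFamily_conjugacy_general A l t ν hν μ hμ hμfin
end

section
/- Donsker–Varadhan variational formula: let (Θ, 𝒯) be a measurable space, ν a probability measure on Θ, and h : Θ → ℝ a measurable function with ∫ e^h dν < ∞. Then: (i) for every probability measure ρ on Θ with ρ ≪ ν, KL(ρ ‖ ν) < ∞ and h ρ-integrable, one has ∫ h dρ − KL(ρ ‖ ν) ≤ log ∫ e^h dν; (ii) if moreover ∫ |h| e^h dν < ∞, then the Gibbs measure ν_h, defined as the probability measure with density dν_h/dν = e^h / ∫ e^h dν with respect to ν, satisfies ∫ h dν_h − KL(ν_h ‖ ν) = log ∫ e^h dν; consequently log ∫ e^h dν = sup over all such ρ of { ∫ h dρ − KL(ρ ‖ ν) }, and the supremum is achieved at ν_h. -/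
open MeasureTheory

/-- The Kullback–Leibler divergence `KL(ρ ‖ ν) = ∫ log(dρ/dν) dρ` (for `ρ ≪ ν`
with integrable log-likelihood ratio). -/
noncomputable def KLdiv {Θ : Type*} [MeasurableSpace Θ] (ρ ν : Measure Θ) : ℝ :=
  ∫ θ, llr ρ ν θ ∂ρ

/-- The Gibbs measure `ν_h`, with density `e^h / ∫ e^h dν` with respect to `ν`. -/
noncomputable def gibbsMeasure {Θ : Type*} [MeasurableSpace Θ] (ν : Measure Θ)
    (h : Θ → ℝ) : Measure Θ :=
  ν.withDensity fun θ => ENNReal.ofReal (Real.exp (h θ) / ∫ θ', Real.exp (h θ') ∂ν)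

lemma gibbsMeasure_eq_tilted {Θ : Type*} [MeasurableSpace Θ] (ν : Measure Θ) (h : Θ → ℝ) :
    gibbsMeasure ν h = ν.tilted h := rfl

/-- Nonnegativity of the KL divergence. -/
lemma integral_llr_nonneg' {Θ : Type*} [MeasurableSpace Θ] {ρ μ : Measure Θ}
    [IsProbabilityMeasure ρ] [IsProbabilityMeasure μ] (hρμ : ρ ≪ μ)
    (h_int : Integrable (llr ρ μ) ρ) : 0 ≤ ∫ θ, llr ρ μ θ ∂ρ := by
  have h1 : ∫ θ, -llr ρ μ θ ∂ρ = ∫ θ, llr μ ρ θ ∂ρ :=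
    integral_congr_ae (MeasureTheory.neg_llr hρμ)
  rw [integral_neg] at h1
  have h_goal : ∫ θ, llr μ ρ θ ∂ρ ≤ 0 → 0 ≤ ∫ θ, llr ρ μ θ ∂ρ := fun hle => by linarith
  apply h_goal
  have h_int' : Integrable (llr μ ρ) ρ := by
    refine (integrable_congr (MeasureTheory.neg_llr hρμ)).mp h_int.neg
  have h_int_rn : Integrable (fun θ => (μ.rnDeriv ρ θ).toReal) ρ :=
    Measure.integrable_toReal_rnDeriv
  calc ∫ θ, llr μ ρ θ ∂ρ
      ≤ ∫ θ, ((μ.rnDeriv ρ θ).toReal - 1) ∂ρ := by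
        refine integral_mono_ae h_int' (h_int_rn.sub (integrable_const 1)) ?_
        filter_upwards [Measure.rnDeriv_pos' hρμ, Measure.rnDeriv_lt_top μ ρ]
          with θ hpos hlt
        have h0 : 0 < (μ.rnDeriv ρ θ).toReal := ENNReal.toReal_pos hpos.ne' hlt.ne
        exact Real.log_le_sub_one_of_pos h0
    _ = ∫ θ, (μ.rnDeriv ρ θ).toReal ∂ρ - 1 := by
        rw [integral_sub h_int_rn (integrable_const 1)]; simp
    _ ≤ 0 := by
        have := Measure.integral_toReal_rnDeriv' (μ := μ) (ν := ρ)
        rw [this]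
        have h2 : 0 ≤ ((μ.singularPart ρ) Set.univ).toReal := ENNReal.toReal_nonneg
        simp only [measureReal_def, measure_univ, ENNReal.toReal_one]
        linarith

/-- Donsker–Varadhan variational formula: (i) for every probability measure
`ρ ≪ ν` with finite KL divergence and `ρ`-integrable `h`,
`∫ h dρ − KL(ρ ‖ ν) ≤ log ∫ e^h dν`; (ii) if moreover `∫ |h| e^h dν < ∞`, the
Gibbs measure `ν_h` satisfies the conditions in (i) and attains equality, so
that `log ∫ e^h dν` is the supremum of `∫ h dρ − KL(ρ ‖ ν)` over all such `ρ`,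
achieved at `ν_h`. -/
theorem donsker_varadhan {Θ : Type*} [MeasurableSpace Θ]
    (ν : Measure Θ) [IsProbabilityMeasure ν]
    (h : Θ → ℝ) (hmeas : Measurable h)
    (hint : Integrable (fun θ => Real.exp (h θ)) ν) :
    (∀ ρ : Measure Θ, IsProbabilityMeasure ρ → ρ ≪ ν →
        Integrable (llr ρ ν) ρ → Integrable h ρ →
        ∫ θ, h θ ∂ρ - KLdiv ρ ν ≤ Real.log (∫ θ, Real.exp (h θ) ∂ν)) ∧
    (Integrable (fun θ => |h θ| * Real.exp (h θ)) ν →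
        IsProbabilityMeasure (gibbsMeasure ν h) ∧
        gibbsMeasure ν h ≪ ν ∧
        Integrable (llr (gibbsMeasure ν h) ν) (gibbsMeasure ν h) ∧
        Integrable h (gibbsMeasure ν h) ∧
        ∫ θ, h θ ∂(gibbsMeasure ν h) - KLdiv (gibbsMeasure ν h) ν
          = Real.log (∫ θ, Real.exp (h θ) ∂ν)) := by
  have hprob : IsProbabilityMeasure (ν.tilted h) := isProbabilityMeasure_tilted hint
  constructor
  · intro ρ hρprob hρν hllr hhρ
    have hρt : ρ ≪ ν.tilted h := hρν.trans (absolutelyContinuous_tilted hint)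
    have h_int_t : Integrable (llr ρ (ν.tilted h)) ρ :=
      integrable_llr_tilted_right hρν hhρ hllr hint
    have h_nonneg : 0 ≤ ∫ θ, llr ρ (ν.tilted h) θ ∂ρ := integral_llr_nonneg' hρt h_int_t
    have h_eq := integral_llr_tilted_right hρν hhρ hint hllr
    rw [KLdiv]
    linarith [h_eq ▸ h_nonneg]
  · intro habs
    rw [gibbsMeasure_eq_tilted]
    set Z : ℝ := ∫ θ, Real.exp (h θ) ∂ν with hZ
    have hZpos : 0 < Z := integral_exp_pos hint
    -- integrability of h with respect to the tilted measure
    have hh_t : Integrable h (ν.tilted h) := by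
      rw [Measure.tilted, integrable_withDensity_iff
        (by fun_prop) (ae_of_all _ fun θ => ENNReal.ofReal_lt_top)]
      have hkey : (fun θ => h θ * (ENNReal.ofReal (Real.exp (h θ) / Z)).toReal)
          = fun θ => h θ * (Real.exp (h θ) / Z) := by
        funext θ; rw [ENNReal.toReal_ofReal (by positivity)]
      rw [hkey]
      refine (habs.div_const Z).mono'
        ((hmeas.mul (hmeas.exp.div_const Z)).aestronglyMeasurable) (ae_of_all _ fun θ => ?_)
      rw [Real.norm_eq_abs, abs_mul, abs_of_nonneg (by positivity : (0:ℝ) ≤ Real.exp (h θ) / Z),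
        mul_div_assoc]
    -- the llr of the tilted measure
    have h_llr : llr (ν.tilted h) ν =ᵐ[ν.tilted h] fun θ => h θ - Real.log Z := by
      have h1 : llr (ν.tilted h) ν =ᵐ[ν]
          fun θ => h θ - Real.log Z + llr ν ν θ :=
        llr_tilted_left Measure.AbsolutelyContinuous.rfl hint hmeas.aemeasurable
      have h2 : llr ν ν =ᵐ[ν] fun _ => (0:ℝ) := by
        filter_upwards [Measure.rnDeriv_self ν] with θ hθ
        simp [llr, hθ]
      have h3 : llr (ν.tilted h) ν =ᵐ[ν] fun θ => h θ - Real.log Z := by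
        filter_upwards [h1, h2] with θ h1θ h2θ
        simp [h1θ, h2θ]
      exact (tilted_absolutelyContinuous ν h).ae_le h3
    have h_llr_int : Integrable (llr (ν.tilted h) ν) (ν.tilted h) := by
      rw [integrable_congr h_llr]
      exact hh_t.sub (integrable_const _)
    refine ⟨hprob, tilted_absolutelyContinuous ν h, h_llr_int, hh_t, ?_⟩
    have : KLdiv (ν.tilted h) ν = ∫ θ, h θ ∂(ν.tilted h) - Real.log Z := by
      rw [KLdiv, integral_congr_ae h_llr, integral_sub hh_t (integrable_const _)]
      simp
    rw [this]
    ring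
end
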